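/- For a PMB RFS with Poisson intensity ρ, Poisson spatial density p_sp, and Bernoulli components (rℓ, p_spℓ), ℓ=1,…,N, the reduced Palm density at a point x with D_PMB(x) > 0 is a mixture of PMB densities: p_{Θ|x}(O|x) = Σ_{Y⁰ ⊎ Y¹ = O} p_Pois(Y⁰) · ( w⁰ · p_MB(Y¹) + Σ_{ℓ=1}^N wℓ · p_{MB∖ℓ}(Y¹) ), where w⁰ = ρ·p_sp(x)/D_PMB(x), wℓ = rℓ·p_spℓ(x)/D_PMB(x), D_PMB(x) = ρ·p_sp(x) + Σℓ rℓ·p_spℓ(x), and p_{MB∖ℓ} denotes the multi-Bernoulli density omitting component ℓ. In particular the mixture weights w⁰, w¹, …, w^N sum to one. -/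

import Mathlib

open MeasureTheory

/-- Density of the union of an independent Poisson RFS (intensity `ρ`, spatial
density `psp`) and the multi-Bernoulli RFS built from the Bernoulli components
with indices in `L ⊆ {1,…,N}` (parameters `(r ℓ, pb ℓ)`).  For `L = univ` this
is the PMB density `p_PMB`; for `L = univ.erase ℓ` it is `p_Pois ⊗ p_{MB∖ℓ}`,
the PMB density with the `ℓ`-th Bernoulli component omitted. -/
noncomputable def pmbGen {X : Type*} (N : ℕ) (L : Finset (Fin N)) (ρ : ℝ) (psp : X → ℝ)
    (r : Fin N → ℝ) (pb : Fin N → X → ℝ) : (n : ℕ) → (Fin n → X) → ℝ :=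
  fun n x => Real.exp (-ρ) *
    ∑ f ∈ (Finset.univ : Finset (Fin n → Option (Fin N))).filter
        (fun f => (∀ i ℓ, f i = some ℓ → ℓ ∈ L) ∧
          ∀ i j ℓ, f i = some ℓ → f j = some ℓ → i = j),
      (∏ ℓ ∈ L.filter (fun ℓ => ∀ i, f i ≠ some ℓ), (1 - r ℓ)) *
        ∏ i, (f i).elim (ρ * psp (x i)) (fun ℓ => r ℓ * pb ℓ (x i))

/-! A point pattern `(x, O)` is explained by an association: each point comes from the Poisson
component or from its own Bernoulli component. Splitting the sum over associations according to
the source of the extra point `x` gives a recursion: the Poisson case contributes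
`ρ·psp(x)` times the PMB density of `O`, the Bernoulli case `ℓ` contributes `rℓ·pbℓ(x)` times the
density with component `ℓ` removed (its miss factor `1 - rℓ` disappears with it). Dividing by
`D_PMB(x)` is then the theorem. -/

open Finset

section Association

variable {α : Type*} {n : ℕ}

/-- `f i = none`: point `i` is Poisson; `f i = some a`: it is the detection of component `a ∈ L`,
and no component detects two points. -/
def IsAssociation (L : Finset α) (f : Fin n → Option α) : Prop :=
  (∀ i a, f i = some a → a ∈ L) ∧ ∀ i j a, f i = some a → f j = some a → i = j

instance [DecidableEq α] (L : Finset α) : DecidablePred (IsAssociation (n := n) L) :=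
  fun _ => inferInstanceAs (Decidable (_ ∧ _))

theorem isAssociation_cons_none {L : Finset α} {g : Fin n → Option α} :
    IsAssociation L (Fin.cons none g) ↔ IsAssociation L g := by
  simp only [IsAssociation, Fin.forall_fin_succ, Fin.cons_zero, Fin.cons_succ, reduceCtorEq,
    false_implies, implies_true, true_and, Fin.succ_inj]

theorem isAssociation_cons_some [DecidableEq α] {L : Finset α} {a : α} {g : Fin n → Option α} :
    IsAssociation L (Fin.cons (some a) g) ↔ a ∈ L ∧ IsAssociation (L.erase a) g := by
  simp only [IsAssociation, Fin.forall_fin_succ, Fin.cons_zero, Fin.cons_succ, Option.some_inj,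
    mem_erase, Fin.succ_inj, forall_eq', Fin.succ_ne_zero, (Fin.succ_ne_zero _).symm]
  grind

theorem filter_forall_cons_none_ne [DecidableEq α] (L : Finset α) (g : Fin n → Option α) :
    L.filter (fun a => ∀ i, (Fin.cons none g : Fin (n + 1) → Option α) i ≠ some a)
      = L.filter (fun a => ∀ i, g i ≠ some a) := by
  ext a
  simp [Fin.forall_fin_succ]

theorem filter_forall_cons_some_ne [DecidableEq α] (L : Finset α) (b : α) (g : Fin n → Option α) :
    L.filter (fun a => ∀ i, (Fin.cons (some b) g : Fin (n + 1) → Option α) i ≠ some a)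
      = (L.erase b).filter (fun a => ∀ i, g i ≠ some a) := by
  ext a
  simp only [mem_filter, mem_erase, Fin.forall_fin_succ, Fin.cons_zero, Fin.cons_succ, ne_eq,
    Option.some_inj]
  tauto

end Association

section Recursion

variable {X : Type*} {N n : ℕ} (L : Finset (Fin N)) (ρ : ℝ) (psp : X → ℝ) (r : Fin N → ℝ)
  (pb : Fin N → X → ℝ)

def associationWeight (f : Fin n → Option (Fin N)) (x : Fin n → X) : ℝ :=
  (∏ ℓ ∈ L.filter (fun ℓ => ∀ i, f i ≠ some ℓ), (1 - r ℓ)) *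
    ∏ i, (f i).elim (ρ * psp (x i)) (fun ℓ => r ℓ * pb ℓ (x i))

theorem pmbGen_eq_sum_ite (x : Fin n → X) :
    pmbGen N L ρ psp r pb n x = Real.exp (-ρ) *
      ∑ f, if IsAssociation L f then associationWeight L ρ psp r pb f x else 0 := by
  rw [pmbGen, sum_filter]
  congr!

theorem associationWeight_cons_none (g : Fin n → Option (Fin N)) (x : X) (O : Fin n → X) :
    associationWeight L ρ psp r pb (Fin.cons none g) (Fin.cons x O)
      = ρ * psp x * associationWeight L ρ psp r pb g O := by
  simp only [associationWeight, filter_forall_cons_none_ne, Fin.prod_univ_succ, Fin.cons_zero,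
    Fin.cons_succ, Option.elim_none]
  ring

theorem associationWeight_cons_some (ℓ : Fin N) (g : Fin n → Option (Fin N)) (x : X)
    (O : Fin n → X) :
    associationWeight L ρ psp r pb (Fin.cons (some ℓ) g) (Fin.cons x O)
      = r ℓ * pb ℓ x * associationWeight (L.erase ℓ) ρ psp r pb g O := by
  simp only [associationWeight, filter_forall_cons_some_ne, Fin.prod_univ_succ, Fin.cons_zero,
    Fin.cons_succ, Option.elim_some]
  ring

theorem pmbGen_cons (x : X) (O : Fin n → X) :
    pmbGen N L ρ psp r pb (n + 1) (Fin.cons x O)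
      = ρ * psp x * pmbGen N L ρ psp r pb n O
        + ∑ ℓ ∈ L, r ℓ * pb ℓ x * pmbGen N (L.erase ℓ) ρ psp r pb n O := by
  simp only [pmbGen_eq_sum_ite]
  rw [← (Fin.consEquiv fun _ => Option (Fin N)).sum_comp, Fintype.sum_prod_type,
    Fintype.sum_option]
  simp only [Fin.consEquiv, Equiv.coe_fn_mk, isAssociation_cons_none, isAssociation_cons_some,
    associationWeight_cons_none, associationWeight_cons_some, ite_and]
  simp only [mul_add, mul_sum, mul_ite, mul_zero, mul_left_comm, sum_ite_irrel, sum_const_zero,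
    sum_ite_mem, univ_inter]

end Recursion

theorem pmb_reduced_palm_general {X : Type*} (N : ℕ) (ρ : ℝ)
    (psp : X → ℝ)
    (r : Fin N → ℝ)
    (pb : Fin N → X → ℝ)
    (x : X) (hD : 0 < ρ * psp x + ∑ ℓ, r ℓ * pb ℓ x) :
    (∀ n (O : Fin n → X),
      pmbGen N Finset.univ ρ psp r pb (n + 1) (Fin.cons x O)
          / (ρ * psp x + ∑ ℓ, r ℓ * pb ℓ x)
        = (ρ * psp x / (ρ * psp x + ∑ ℓ, r ℓ * pb ℓ x)) *
            pmbGen N Finset.univ ρ psp r pb n O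
          + ∑ ℓ, (r ℓ * pb ℓ x / (ρ * psp x + ∑ ℓ', r ℓ' * pb ℓ' x)) *
              pmbGen N (Finset.univ.erase ℓ) ρ psp r pb n O) ∧
    ρ * psp x / (ρ * psp x + ∑ ℓ, r ℓ * pb ℓ x)
        + ∑ ℓ, r ℓ * pb ℓ x / (ρ * psp x + ∑ ℓ', r ℓ' * pb ℓ' x) = 1 := by
  refine ⟨fun n O => ?_, ?_⟩
  · simp only [pmbGen_cons, add_div, sum_div, mul_div_right_comm]
  · rw [← sum_div, ← add_div, div_self hD.ne']

/-- The reduced Palm density of a PMB RFS at a point `x` with `D_PMB(x) > 0`,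
`p_{Θ|x}(O|x) = p_PMB(O ∪ {x}) / D_PMB(x)`, is the mixture of PMB densities
`w⁰·p_PMB(O) + Σ_ℓ wℓ·(p_Pois ⊗ p_{MB∖ℓ})(O)` with weights
`w⁰ = ρ·psp(x)/D_PMB(x)`, `wℓ = rℓ·pbℓ(x)/D_PMB(x)`, where
`D_PMB(x) = ρ·psp(x) + Σ_ℓ rℓ·pbℓ(x)`; moreover the weights sum to one. -/
theorem pmb_reduced_palm {X : Type*} (N : ℕ) (ρ : ℝ) (hρ : 0 ≤ ρ)
    (psp : X → ℝ) (hpsp_nn : ∀ x, 0 ≤ psp x)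
    (r : Fin N → ℝ) (hr : ∀ ℓ, r ℓ ∈ Set.Icc (0 : ℝ) 1)
    (pb : Fin N → X → ℝ) (hpb_nn : ∀ ℓ x, 0 ≤ pb ℓ x)
    (x : X) (hD : 0 < ρ * psp x + ∑ ℓ, r ℓ * pb ℓ x) :
    (∀ n (O : Fin n → X),
      pmbGen N Finset.univ ρ psp r pb (n + 1) (Fin.cons x O)
          / (ρ * psp x + ∑ ℓ, r ℓ * pb ℓ x)
        = (ρ * psp x / (ρ * psp x + ∑ ℓ, r ℓ * pb ℓ x)) *
            pmbGen N Finset.univ ρ psp r pb n O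
          + ∑ ℓ, (r ℓ * pb ℓ x / (ρ * psp x + ∑ ℓ', r ℓ' * pb ℓ' x)) *
              pmbGen N (Finset.univ.erase ℓ) ρ psp r pb n O) ∧
    ρ * psp x / (ρ * psp x + ∑ ℓ, r ℓ * pb ℓ x)
        + ∑ ℓ, r ℓ * pb ℓ x / (ρ * psp x + ∑ ℓ', r ℓ' * pb ℓ' x) = 1 :=
  pmb_reduced_palm_general N ρ psp r pb x hD
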